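/- Assume N ≥ 2. Let p ≥ 0 be an integer and let λ be a weight with (λ, η) = 1 - N and (λ, α_N) = -p - 1, and let μ be the weight determined by (μ, α_j) = (λ, α_j) + p·a_{Nj} for all j (i.e. μ = λ + p α_N). Then, with F = f_N: F^{p+1} · det→(D^{N}(μ)) = v^{p+1} · det→(D^{N+1}(λ)) · F^{p} in U. -/

import Mathlib

noncomputable section

open FreeAlgebra

/-- `𝕜 = F(q)`, the field of rational functions over `F`. -/
abbrev kk (F : Type) [Field F] : Type := RatFunc F

/-- The variable `q`. -/
def qq (F : Type) [Field F] : kk F := RatFunc.X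

/-- `v = q²`. -/
def vv (F : Type) [Field F] : kk F := qq F ^ 2

/-- The balanced quantum integer `[n]_v`. -/
def qint (F : Type) [Field F] (n : ℤ) : kk F :=
  (vv F ^ n - vv F ^ (-n)) / (vv F - (vv F)⁻¹)

/-- The quantum factorial `[m]_v!`. -/
def qfact (F : Type) [Field F] (m : ℕ) : kk F :=
  ∏ j ∈ Finset.Icc 1 m, qint F j

/-- The balanced Gaussian binomial coefficient `C(n,i)_v`. -/
def qbinom (F : Type) [Field F] (n i : ℕ) : kk F :=
  qfact F n / (qfact F i * qfact F (n - i))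

/-- The Cartan matrix of `sl(N+1)`, with 1-based indices. -/
def cartan (i j : ℕ) : ℤ :=
  if i = j then 2 else if i + 1 = j ∨ j + 1 = i then -1 else 0

/-- Generators of `U_q(sl(N+1))`: `e i`, `f i`, `k i`, `kinv i` (0-based `i : Fin N`,
corresponding to the 1-based index `i+1`). -/
inductive Gen (N : ℕ) : Type
  | e : Fin N → Gen N
  | f : Fin N → Gen N
  | k : Fin N → Gen N
  | kinv : Fin N → Gen N

/-- The defining relations of `U_q(sl(N+1))`. -/
inductive UqRel (F : Type) [Field F] (N : ℕ) :
    FreeAlgebra (kk F) (Gen N) → FreeAlgebra (kk F) (Gen N) → Prop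
  | kkinv (i : Fin N) : UqRel F N (ι (kk F) (Gen.k i) * ι (kk F) (Gen.kinv i)) 1
  | kinvk (i : Fin N) : UqRel F N (ι (kk F) (Gen.kinv i) * ι (kk F) (Gen.k i)) 1
  | kcomm (i j : Fin N) :
      UqRel F N (ι (kk F) (Gen.k i) * ι (kk F) (Gen.k j))
        (ι (kk F) (Gen.k j) * ι (kk F) (Gen.k i))
  | ke (i j : Fin N) :
      UqRel F N (ι (kk F) (Gen.k i) * ι (kk F) (Gen.e j) * ι (kk F) (Gen.kinv i))
        ((qq F ^ cartan ((i : ℕ) + 1) ((j : ℕ) + 1)) • ι (kk F) (Gen.e j))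
  | kf (i j : Fin N) :
      UqRel F N (ι (kk F) (Gen.k i) * ι (kk F) (Gen.f j) * ι (kk F) (Gen.kinv i))
        ((qq F ^ (-cartan ((i : ℕ) + 1) ((j : ℕ) + 1))) • ι (kk F) (Gen.f j))
  | ef (i j : Fin N) :
      UqRel F N (ι (kk F) (Gen.e i) * ι (kk F) (Gen.f j) - ι (kk F) (Gen.f j) * ι (kk F) (Gen.e i))
        (if i = j then
          ((qq F ^ 2 - qq F ^ (-2 : ℤ))⁻¹) •
            ((ι (kk F) (Gen.k i)) ^ 2 - (ι (kk F) (Gen.kinv i)) ^ 2)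
        else 0)
  | serre_e_near (i j : Fin N) (h : (i : ℕ) + 1 = j ∨ (j : ℕ) + 1 = i) :
      UqRel F N
        ((ι (kk F) (Gen.e i)) ^ 2 * ι (kk F) (Gen.e j)
          - (qq F ^ 2 + qq F ^ (-2 : ℤ)) •
              (ι (kk F) (Gen.e i) * ι (kk F) (Gen.e j) * ι (kk F) (Gen.e i))
          + ι (kk F) (Gen.e j) * (ι (kk F) (Gen.e i)) ^ 2) 0
  | serre_f_near (i j : Fin N) (h : (i : ℕ) + 1 = j ∨ (j : ℕ) + 1 = i) :
      UqRel F N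
        ((ι (kk F) (Gen.f i)) ^ 2 * ι (kk F) (Gen.f j)
          - (qq F ^ 2 + qq F ^ (-2 : ℤ)) •
              (ι (kk F) (Gen.f i) * ι (kk F) (Gen.f j) * ι (kk F) (Gen.f i))
          + ι (kk F) (Gen.f j) * (ι (kk F) (Gen.f i)) ^ 2) 0
  | serre_e_far (i j : Fin N) (h : (i : ℕ) + 1 < j ∨ (j : ℕ) + 1 < i) :
      UqRel F N (ι (kk F) (Gen.e i) * ι (kk F) (Gen.e j))
        (ι (kk F) (Gen.e j) * ι (kk F) (Gen.e i))
  | serre_f_far (i j : Fin N) (h : (i : ℕ) + 1 < j ∨ (j : ℕ) + 1 < i) :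
      UqRel F N (ι (kk F) (Gen.f i) * ι (kk F) (Gen.f j))
        (ι (kk F) (Gen.f j) * ι (kk F) (Gen.f i))

/-- The quantized enveloping algebra `U = U_q(sl(N+1))`. -/
abbrev Uq (F : Type) [Field F] (N : ℕ) : Type := RingQuot (UqRel F N)

variable (F : Type) [Field F] (N : ℕ)

/-- The image of a generator in `U`. -/
def gen (g : Gen N) : Uq F N := RingQuot.mkAlgHom (kk F) (UqRel F N) (ι (kk F) g)

/-- `e_i` (1-based index `1 ≤ i ≤ N`; junk value `0` outside this range). -/
def egen (i : ℕ) : Uq F N :=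
  if h : 1 ≤ i ∧ i ≤ N then gen F N (Gen.e ⟨i - 1, by omega⟩) else 0

/-- `f_i` (1-based index). -/
def fgen (i : ℕ) : Uq F N :=
  if h : 1 ≤ i ∧ i ≤ N then gen F N (Gen.f ⟨i - 1, by omega⟩) else 0

/-- `k_i` (1-based index). -/
def kgen (i : ℕ) : Uq F N :=
  if h : 1 ≤ i ∧ i ≤ N then gen F N (Gen.k ⟨i - 1, by omega⟩) else 0

/-- `k_i⁻¹` (1-based index). -/
def kinvgen (i : ℕ) : Uq F N :=
  if h : 1 ≤ i ∧ i ≤ N then gen F N (Gen.kinv ⟨i - 1, by omega⟩) else 0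

/-- Auxiliary recursion: `fword i d = f_{i, i+1+d}`. -/
def fword (i : ℕ) : ℕ → Uq F N
  | 0 => fgen F N i
  | d + 1 =>
      qq F • (fword i d * fgen F N (i + 1 + d)) -
        (qq F)⁻¹ • (fgen F N (i + 1 + d) * fword i d)

/-- The quantum root vector `f_{i,j}` (for `1 ≤ i < j ≤ N+1`). -/
def fij (i j : ℕ) : Uq F N := fword F N i (j - i - 1)

/-- Product of `f_{a,b}` over successive entries of a list. -/
def fList : List ℕ → Uq F N
  | a :: b :: rest => fij F N a b * fList (b :: rest)
  | _ => 1

/-- `f_S` for a finite set `S` of indices. -/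
def fSet (S : Finset ℕ) : Uq F N := fList F N (S.sort (· ≤ ·))

/-- The index set `𝕀` of subsets of `{1,…,N+1}` containing `1` and `N+1`. -/
def II : Finset (Finset ℕ) :=
  (Finset.Icc 1 (N + 1)).powerset.filter fun I => 1 ∈ I ∧ N + 1 ∈ I

/-- `r(I) = {s - 1 : s ∈ {1,…,N+1} \ I}`. -/
def rSet (I : Finset ℕ) : Finset ℕ := (Finset.Icc 1 (N + 1) \ I).image (· - 1)

/-- `k_{σ_i} = k_1 ⋯ k_i`. -/
def kσ (i : ℕ) : Uq F N := ((List.range i).map fun j => kgen F N (j + 1)).prod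

/-- `K_{σ_i} = k_{σ_i}²`. -/
def Kσ (i : ℕ) : Uq F N := kσ F N i ^ 2

/-- `k_{σ_i}⁻¹ = k_1⁻¹ ⋯ k_i⁻¹`. -/
def kσinv (i : ℕ) : Uq F N := ((List.range i).map fun j => kinvgen F N (j + 1)).prod

/-- `K_{σ_i}⁻¹`. -/
def KσInv (i : ℕ) : Uq F N := kσinv F N i ^ 2

/-- The element `h_i = -q⁻¹ v^{-(i-1)} K_{σ_i}⁻¹ (K_{σ_i} v^i - K_{σ_i}⁻¹ v^{-i})/(v - v⁻¹) ∈ U`. -/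
def hElt (i : ℕ) : Uq F N :=
  (-(qq F)⁻¹ * vv F ^ (1 - (i : ℤ)) * (vv F - (vv F)⁻¹)⁻¹) •
    (KσInv F N i * (vv F ^ (i : ℤ) • Kσ F N i - vv F ^ (-(i : ℤ)) • KσInv F N i))

/-- `H_I = ∏_{i ∈ r(I)} h_i` (product taken in increasing order of indices). -/
def HI (I : Finset ℕ) : Uq F N := (((rSet N I).sort (· ≤ ·)).map (hElt F N)).prod

/-- A weight `λ` is recorded by its values `(λ, α_j)` for `1 ≤ j ≤ N`;
`pairσ lam i = (λ, σ_i) = (λ, α_1 + ⋯ + α_i)`. -/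
def pairσ (lam : ℕ → ℤ) (i : ℕ) : ℤ := ∑ j ∈ Finset.Icc 1 i, lam j

/-- The scalar `h_i(λ) = -q⁻¹ v^{-((λ,σ_i)+i-1)} [(λ,σ_i)+i]_v`. -/
def hval (lam : ℕ → ℤ) (i : ℕ) : kk F :=
  -(qq F)⁻¹ * vv F ^ (-(pairσ lam i + (i : ℤ) - 1)) * qint F (pairσ lam i + (i : ℤ))

/-- The scalar `H_I(λ) = ∏_{i ∈ r(I)} h_i(λ)`. -/
def HIval (lam : ℕ → ℤ) (I : Finset ℕ) : kk F := ∏ i ∈ rSet N I, hval F lam i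

/-- The left ideal `J_λ` of `U` generated by `e_1, …, e_N` and the `k_j - q^{(λ,α_j)}`. -/
def vermaIdeal (lam : ℕ → ℤ) : Submodule (Uq F N) (Uq F N) :=
  Submodule.span (Uq F N)
    ({x | ∃ j, 1 ≤ j ∧ j ≤ N ∧ x = egen F N j} ∪
      {x | ∃ j, 1 ≤ j ∧ j ≤ N ∧
        x = kgen F N j - algebraMap (kk F) (Uq F N) (qq F ^ lam j)})

/-- The Verma module `M(λ) = U/J_λ`. -/
abbrev Verma (lam : ℕ → ℤ) : Type := Uq F N ⧸ vermaIdeal F N lam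

/-- The highest weight vector `v_λ`, the image of `1` in `M(λ)`. -/
def hw (lam : ℕ → ℤ) : Verma F N lam := Submodule.Quotient.mk 1

/-- The candidate Shapovalov element `Θ_η = Σ_{I ∈ 𝕀} f_I H_I`. -/
def Theta : Uq F N := ∑ I ∈ II N, fSet F N I * HI F N I

/-- `D^n(λ)`: the `(n-1) × (n-1)` matrix over `U` with `(i,j)` entry (1-based)
`f_{i,j+1}` if `i ≤ j`, `-h_j(λ)·1` if `i = j+1`, and `0` otherwise. -/
def Dmat (lam : ℕ → ℤ) (n : ℕ) : Matrix (Fin (n - 1)) (Fin (n - 1)) (Uq F N) :=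
  Matrix.of fun i j =>
    if (i : ℕ) ≤ (j : ℕ) then fij F N ((i : ℕ) + 1) ((j : ℕ) + 2)
    else if (i : ℕ) = (j : ℕ) + 1 then
      -(algebraMap (kk F) (Uq F N) (hval F lam ((j : ℕ) + 1)))
    else 0

/-- The left-to-right determinant of a matrix with noncommutative entries. -/
def ldet {m : ℕ} (B : Matrix (Fin m) (Fin m) (Uq F N)) : Uq F N :=
  ∑ w : Equiv.Perm (Fin m),
    ((Equiv.Perm.sign w : ℤˣ) : ℤ) • ((List.finRange m).map fun j => B (w j) j).prod

end

/-!
Both determinants are Hessenberg. Expanding `det→` along the last column, and then each minor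
along its row `(0, …, 0, -h_{N-1}(λ))`, gives
`det→ D^{N+1}(λ) = det→ D^N(λ) · f_N + h_{N-1}(λ) · X`, where `X` is `det→ D^N(λ)` with its last
column `f_{i,N}` replaced by `f_{i,N+1}`; and `D^N(μ) = D^N(λ)`, since `μ` and `λ` differ only
on `α_{N-1}` and `α_N`, which `D^N` does not see.

Only the last column of `D^N(λ)` fails to commute with `F = f_N`. There `f_{i,N+1}` is the
`q`-commutator of `f_{i,N}` and `F`, and the Serre relations give `F f_{i,N+1} = v⁻¹ f_{i,N+1} F`,
whence `F^{p+1} f_{i,N} = v^{p+1} f_{i,N} F^{p+1} - q [p+1]_v f_{i,N+1} F^p`. As `det→` is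
right-linear in its last column,
`F^{p+1} det→ D^N(λ) = v^{p+1} det→ D^N(λ) F^{p+1} - q [p+1]_v X F^p`,
and the two hypotheses on `λ` say exactly that `v^{p+1} h_{N-1}(λ) = -q [p+1]_v`.
-/

section QCommutator

variable {K R : Type*} [Field K] [Ring R] [Algebra K R]

def qComm (q : K) (a b : R) : R := q • (a * b) - q⁻¹ • (b * a)

def qSerre (c : K) (x y : R) : R := x * x * y - c • (x * y * x) + y * (x * x)

lemma qSerre_qComm_of_commute {c q : K} {x a b : R} (hxa : Commute x a)
    (hxb : qSerre c x b = 0) : qSerre c x (qComm q a b) = 0 := by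
  have hxxa : Commute (x * x) a := hxa.mul_left hxa
  have hleft : qSerre c x (a * b) = a * qSerre c x b := by
    simp only [qSerre, mul_add, mul_sub, mul_smul_comm, ← mul_assoc, hxxa.eq, hxa.eq]
  have hright : qSerre c x (b * a) = qSerre c x b * a := by
    simp only [qSerre, add_mul, sub_mul, smul_mul_assoc, mul_assoc, hxxa.eq, hxa.eq]
  have hlin : qSerre c x (qComm q a b) =
      q • qSerre c x (a * b) - q⁻¹ • qSerre c x (b * a) := by
    simp only [qSerre, qComm, mul_sub, sub_mul, mul_smul_comm, smul_mul_assoc]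
    module
  rw [hlin, hleft, hright, hxb]
  simp

variable {q v : K}

lemma mul_eq_sub_qComm (hq : q ≠ 0) (hv : v = q ^ 2) (x a : R) :
    x * a = v • (a * x) - q • qComm q a x := by
  subst hv
  simp only [qComm, smul_sub, smul_smul]
  match_scalars <;> simp [hq, pow_two]

lemma mul_qComm_of_qSerre (hq : q ≠ 0) (hv : v = q ^ 2) {x a : R}
    (h : qSerre (v + v⁻¹) x a = 0) : x * qComm q a x = v⁻¹ • (qComm q a x * x) := by
  have hxxa : x * x * a = (v + v⁻¹) • (x * a * x) - a * (x * x) := by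
    rw [← sub_eq_zero, ← h, qSerre]; abel
  simp only [qComm, mul_sub, sub_mul, mul_smul_comm, smul_mul_assoc, ← mul_assoc, hxxa]
  simp only [smul_sub, smul_smul, mul_assoc]
  subst hv
  match_scalars
  · field_simp
    ring
  · field_simp

/-- Here `c n` is the quantum integer `[n]_v`, given by its recursion. -/
lemma pow_succ_mul_eq_sub_qComm (hq : q ≠ 0) (hv : v = q ^ 2) {x a : R}
    (h : qSerre (v + v⁻¹) x a = 0) (c : ℕ → K) (hc0 : c 0 = 0)
    (hc : ∀ n, c (n + 1) = v ^ n + v⁻¹ * c n) (p : ℕ) :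
    x ^ (p + 1) * a =
      v ^ (p + 1) • (a * x ^ (p + 1)) - (q * c (p + 1)) • (qComm q a x * x ^ p) := by
  have hxa := mul_eq_sub_qComm hq hv x a
  have hxC := mul_qComm_of_qSerre hq hv h
  induction p with
  | zero => simpa [hc, hc0] using hxa
  | succ n ih =>
    rw [pow_succ' x (n + 1), mul_assoc, ih, mul_sub, mul_smul_comm, mul_smul_comm,
      ← mul_assoc x a, hxa, ← mul_assoc x (qComm q a x), hxC]
    simp only [sub_mul, smul_mul_assoc, smul_sub, smul_smul, mul_assoc, ← pow_succ',
      hc (n + 1)]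
    have hv0 : v ≠ 0 := hv ▸ pow_ne_zero 2 hq
    match_scalars <;> field_simp <;> ring

end QCommutator

section LeftDeterminant

variable {F : Type} [Field F] {N : ℕ}

/-- `mul_neg` and `neg_mul` do not fire on `Uq F N`: the negation they expect (through
`HasDistribNeg`) is not reducibly the `RingQuot` one that `-x` elaborates to. -/
lemma uq_mul_neg (x y : Uq F N) : x * -y = -(x * y) := mul_neg x y

lemma uq_neg_mul (x y : Uq F N) : -x * y = -(x * y) := neg_mul x y

lemma ldet_eq_sum_mul_last {k : ℕ} (B : Matrix (Fin (k + 1)) (Fin (k + 1)) (Uq F N)) :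
    ldet F N B = ∑ w : Equiv.Perm (Fin (k + 1)), ((Equiv.Perm.sign w : ℤˣ) : ℤ) •
      (((List.finRange k).map fun j => B (w j.castSucc) j.castSucc).prod *
        B (w (Fin.last k)) (Fin.last k)) := by
  refine Finset.sum_congr rfl fun w _ => ?_
  rw [List.finRange_succ_last, List.map_append, List.prod_append, List.map_map]
  simp only [List.map_cons, List.map_nil, List.prod_cons, List.prod_nil, mul_one]
  rfl

lemma ldet_eq_zero_of_row_eq_zero {k : ℕ} (B : Matrix (Fin k) (Fin k) (Uq F N)) (r : Fin k)
    (h : ∀ j, B r j = 0) : ldet F N B = 0 := by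
  refine Finset.sum_eq_zero fun w _ => ?_
  have hmem : (0 : Uq F N) ∈ (List.finRange k).map fun j => B (w j) j :=
    List.mem_map.2 ⟨w⁻¹ r, List.mem_finRange _, by simp [h]⟩
  simp [List.prod_eq_zero hmem]

lemma mul_ldet_of_commute {k : ℕ} (B B' : Matrix (Fin (k + 1)) (Fin (k + 1)) (Uq F N))
    {x y z : Uq F N} (hBB' : ∀ i (j : Fin k), B' i j.castSucc = B i j.castSucc)
    (hx : ∀ i (j : Fin k), Commute x (B i j.castSucc))
    (hlast : ∀ i, x * B i (Fin.last k) = B i (Fin.last k) * y - B' i (Fin.last k) * z) :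
    x * ldet F N B = ldet F N B * y - ldet F N B' * z := by
  simp only [ldet_eq_sum_mul_last, Finset.mul_sum, Finset.sum_mul, ← Finset.sum_sub_distrib,
    hBB', mul_smul_comm, smul_mul_assoc]
  refine Finset.sum_congr rfl fun w _ => (congrArg _ ?_).trans (zsmul_sub _ _ _)
  have hP : Commute x ((List.finRange k).map fun j => B (w j.castSucc) j.castSucc).prod :=
    Commute.list_prod_right _ _ fun _ hy => by
      obtain ⟨j, -, rfl⟩ := List.mem_map.1 hy
      exact hx _ _
  rw [← mul_assoc, hP.eq, mul_assoc, hlast, mul_sub, mul_assoc, mul_assoc]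

end LeftDeterminant

section LastColumnExpansion

variable {k : ℕ}

/-- A permutation `w` of `Fin (k + 1)` is recorded by the row `w (last k)` (`none` standing for
`last k`) and the permutation of `Fin k` it induces on the remaining rows. -/
def permLastEquiv (k : ℕ) : Option (Fin k) × Equiv.Perm (Fin k) ≃ Equiv.Perm (Fin (k + 1)) :=
  Equiv.Perm.decomposeOption.symm.trans finSuccEquivLast.symm.permCongr

lemma permLastEquiv_castSucc (x : Option (Fin k)) (σ : Equiv.Perm (Fin k)) (j : Fin k) :
    permLastEquiv k (x, σ) j.castSucc =
      finSuccEquivLast.symm (Equiv.swap none x (some (σ j))) := by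
  simp [permLastEquiv, Equiv.permCongr_apply, Equiv.Perm.decomposeOption_symm_apply,
    finSuccEquivLast_castSucc, Equiv.Perm.mul_apply]

lemma permLastEquiv_none_castSucc (σ : Equiv.Perm (Fin k)) (j : Fin k) :
    permLastEquiv k (none, σ) j.castSucc = (σ j).castSucc := by
  simp [permLastEquiv_castSucc]

lemma permLastEquiv_some_castSucc (r : Fin k) (σ : Equiv.Perm (Fin k)) (j : Fin k) :
    permLastEquiv k (some r, σ) j.castSucc =
      if σ j = r then Fin.last k else (σ j).castSucc := by
  rw [permLastEquiv_castSucc]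
  by_cases h : σ j = r
  · simp [h]
  · simp [Equiv.swap_apply_of_ne_of_ne, h]

lemma permLastEquiv_last (x : Option (Fin k)) (σ : Equiv.Perm (Fin k)) :
    permLastEquiv k (x, σ) (Fin.last k) = x.elim (Fin.last k) Fin.castSucc := by
  cases x <;> simp [permLastEquiv, Equiv.permCongr_apply, Equiv.Perm.decomposeOption_symm_apply,
    finSuccEquivLast_last, Equiv.Perm.mul_apply]

lemma sign_permLastEquiv (x : Option (Fin k)) (σ : Equiv.Perm (Fin k)) :
    Equiv.Perm.sign (permLastEquiv k (x, σ)) =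
      (if x = none then 1 else -1) * Equiv.Perm.sign σ := by
  cases x <;> simp [permLastEquiv, Equiv.Perm.sign_permCongr,
    Equiv.Perm.decomposeOption_symm_apply, Equiv.optionCongr_sign]

variable {F : Type} [Field F] {N : ℕ}

lemma ldet_expand_last (B : Matrix (Fin (k + 1)) (Fin (k + 1)) (Uq F N)) :
    ldet F N B =
      ldet F N (B.submatrix Fin.castSucc Fin.castSucc) * B (Fin.last k) (Fin.last k)
      - ∑ r : Fin k,
          ldet F N (B.submatrix (fun p => if p = r then Fin.last k else p.castSucc) Fin.castSucc)
            * B r.castSucc (Fin.last k) := by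
  rw [ldet_eq_sum_mul_last, ← (permLastEquiv k).sum_comp, Fintype.sum_prod_type,
    Fintype.sum_option, sub_eq_add_neg, ← Finset.sum_neg_distrib]
  congr 1
  · rw [ldet, Finset.sum_mul]
    refine Finset.sum_congr rfl fun σ _ => ?_
    simp only [sign_permLastEquiv, permLastEquiv_none_castSucc, permLastEquiv_last,
      smul_mul_assoc]
    simp
  · refine Finset.sum_congr rfl fun r _ => ?_
    rw [ldet, Finset.sum_mul, ← Finset.sum_neg_distrib]
    refine Finset.sum_congr rfl fun σ _ => ?_
    simp only [sign_permLastEquiv, permLastEquiv_some_castSucc, permLastEquiv_last,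
      smul_mul_assoc]
    simp

lemma ldet_eq_of_last_row (B : Matrix (Fin (k + 1)) (Fin (k + 1)) (Uq F N))
    (h : ∀ j : Fin k, B (Fin.last k) j.castSucc = 0) :
    ldet F N B =
      ldet F N (B.submatrix Fin.castSucc Fin.castSucc) * B (Fin.last k) (Fin.last k) := by
  rw [ldet_expand_last, sub_eq_self]
  refine Finset.sum_eq_zero fun s _ => ?_
  rw [ldet_eq_zero_of_row_eq_zero _ s (by simpa using h), zero_mul]

lemma ldet_eq_of_row (B : Matrix (Fin (k + 1)) (Fin (k + 1)) (Uq F N)) (r : Fin k)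
    (h : ∀ j : Fin k, B r.castSucc j.castSucc = 0) :
    ldet F N B = -(ldet F N (B.submatrix (fun p => if p = r then Fin.last k else p.castSucc)
      Fin.castSucc) * B r.castSucc (Fin.last k)) := by
  have hzero : ∀ s ≠ r, ldet F N (B.submatrix
      (fun p => if p = s then Fin.last k else p.castSucc) Fin.castSucc) = 0 := fun s hs =>
    ldet_eq_zero_of_row_eq_zero _ r (by simpa [hs.symm] using h)
  rw [ldet_expand_last, ldet_eq_zero_of_row_eq_zero _ r h, zero_mul, zero_sub,
    Finset.sum_eq_single r (fun s _ hs => by rw [hzero s hs, zero_mul]) (by simp)]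

end LastColumnExpansion

section Hessenberg

/-- `D^n(λ)` is the leading `(n-1) × (n-1)` block of the infinite matrix with these entries
(0-based indices). -/
noncomputable def hessEntry (F : Type) [Field F] (N : ℕ) (lam : ℕ → ℤ) (i j : ℕ) : Uq F N :=
  if i ≤ j then fij F N (i + 1) (j + 2)
  else if i = j + 1 then -algebraMap (kk F) (Uq F N) (hval F lam (j + 1)) else 0

noncomputable def hess (F : Type) [Field F] (N : ℕ) (lam : ℕ → ℤ) (m : ℕ) :
    Matrix (Fin m) (Fin m) (Uq F N) :=
  Matrix.of fun i j => hessEntry F N lam i j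

noncomputable def hessCol (F : Type) [Field F] (N : ℕ) (lam : ℕ → ℤ) (m t : ℕ) :
    Matrix (Fin (m + 1)) (Fin (m + 1)) (Uq F N) :=
  Matrix.of fun i j => if j = Fin.last m then fij F N (i + 1) t else hessEntry F N lam i j

/-- The minors in the last-column expansion of `hessCol F N lam m t`: its last column is
deleted and its last row takes the place of row `r`. -/
noncomputable def hessMinor (F : Type) [Field F] (N : ℕ) (lam : ℕ → ℤ) (m : ℕ) (r : Fin m) :
    Matrix (Fin m) (Fin m) (Uq F N) :=
  Matrix.of fun p j => hessEntry F N lam (if p = r then m else p) j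

variable {F : Type} [Field F] {N : ℕ} {lam : ℕ → ℤ} {m : ℕ}

lemma Dmat_succ : Dmat F N lam (m + 1) = hess F N lam m := rfl

lemma hessEntry_of_add_one_lt {i j : ℕ} (h : j + 1 < i) : hessEntry F N lam i j = 0 := by
  simp [hessEntry, show ¬i ≤ j by omega, show i ≠ j + 1 by omega]

lemma hessEntry_succ_self (j : ℕ) :
    hessEntry F N lam (j + 1) j = -algebraMap (kk F) (Uq F N) (hval F lam (j + 1)) := by
  simp [hessEntry]

lemma hess_succ : hess F N lam (m + 1) = hessCol F N lam m (m + 2) := by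
  ext i j
  by_cases hj : j = Fin.last m
  · simp [hess, hessCol, hessEntry, hj, not_lt.2 (Fin.le_last i)]
  · simp [hess, hessCol, hj]

lemma hessCol_submatrix_castSucc (t : ℕ) :
    (hessCol F N lam m t).submatrix Fin.castSucc Fin.castSucc = hess F N lam m := by
  ext i j
  simp [hessCol, hess, Fin.castSucc_ne_last]

lemma hessCol_submatrix_minor (t : ℕ) (r : Fin m) :
    (hessCol F N lam m t).submatrix (fun p => if p = r then Fin.last m else p.castSucc)
      Fin.castSucc = hessMinor F N lam m r := by
  ext p j
  by_cases hp : p = r <;> simp [hessCol, hessMinor, hp, Fin.castSucc_ne_last]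

lemma ldet_hessMinor_last :
    ldet F N (hessMinor F N lam (m + 1) (Fin.last m)) =
      -(ldet F N (hess F N lam m) * algebraMap (kk F) (Uq F N) (hval F lam (m + 1))) := by
  rw [ldet_eq_of_last_row _ fun j => by
    simpa [hessMinor] using hessEntry_of_add_one_lt (show (j : ℕ) + 1 < m + 1 by omega)]
  have hsub : (hessMinor F N lam (m + 1) (Fin.last m)).submatrix Fin.castSucc Fin.castSucc =
      hess F N lam m := by
    ext p j
    simp [hessMinor, hess, Fin.castSucc_ne_last]
  rw [hsub]
  simp only [hessMinor, Matrix.of_apply, if_pos, Fin.val_last, hessEntry_succ_self, uq_mul_neg]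

lemma ldet_hessMinor_castSucc (r : Fin m) :
    ldet F N (hessMinor F N lam (m + 1) r.castSucc) =
      ldet F N (hessMinor F N lam m r) * algebraMap (kk F) (Uq F N) (hval F lam (m + 1)) := by
  rw [ldet_eq_of_row _ r fun j => by
    simpa [hessMinor] using hessEntry_of_add_one_lt (show (j : ℕ) + 1 < m + 1 by omega)]
  have hsub : (hessMinor F N lam (m + 1) r.castSucc).submatrix
      (fun p => if p = r then Fin.last m else p.castSucc) Fin.castSucc =
        hessMinor F N lam m r := by
    ext p j
    by_cases hp : p = r <;> simp [hessMinor, hp, (Fin.castSucc_ne_last r).symm]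
  rw [hsub]
  simp only [hessMinor, Matrix.of_apply, if_pos, Fin.val_last, hessEntry_succ_self, uq_mul_neg,
    neg_neg]

lemma ldet_hessCol_succ (t : ℕ) :
    ldet F N (hessCol F N lam (m + 1) t) =
      ldet F N (hess F N lam (m + 1)) * fij F N (m + 2) t +
        hval F lam (m + 1) • ldet F N (hessCol F N lam m t) := by
  rw [ldet_expand_last, hessCol_submatrix_castSucc, Fin.sum_univ_castSucc,
    ldet_expand_last (hessCol F N lam m t), hessCol_submatrix_castSucc]
  simp only [hessCol_submatrix_minor, ldet_hessMinor_castSucc, ldet_hessMinor_last]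
  simp only [hessCol, Matrix.of_apply, ↓reduceIte, Fin.val_last, ← Algebra.commutes,
    ← Algebra.smul_def, Fin.val_castSucc, Algebra.smul_mul_assoc, uq_neg_mul, smul_sub,
    Finset.smul_sum]
  abel

end Hessenberg

section QuantumIntegers

variable {F : Type} [Field F]

lemma qq_ne_zero (F : Type) [Field F] : qq F ≠ 0 := RatFunc.X_ne_zero

lemma vv_sq_ne_one (F : Type) [Field F] : vv F ^ 2 ≠ 1 := by
  intro h
  have hX : (Polynomial.X ^ 4 : Polynomial F) = 1 :=
    RatFunc.algebraMap_injective F (by simpa [vv, qq, ← pow_mul] using h)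
  simpa using congrArg Polynomial.natDegree hX

lemma qint_zero : qint F 0 = 0 := by simp [qint]

lemma qint_succ (n : ℕ) : qint F (n + 1) = vv F ^ n + (vv F)⁻¹ * qint F n := by
  have hv : vv F ≠ 0 := pow_ne_zero 2 (qq_ne_zero F)
  have hd : vv F ^ 2 - 1 ≠ 0 := sub_ne_zero.2 (vv_sq_ne_one F)
  simp only [qint, zpow_add₀ hv, zpow_neg, zpow_natCast, zpow_one]
  field_simp
  ring

end QuantumIntegers

section RootVectors

variable {F : Type} [Field F] {N : ℕ}

lemma fij_self (a : ℕ) : fij F N a (a + 1) = fgen F N a := by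
  simp [fij, fword]

lemma fij_succ {a b : ℕ} (h : a < b) :
    fij F N a (b + 1) = qComm (qq F) (fij F N a b) (fgen F N b) := by
  obtain ⟨d, rfl⟩ : ∃ d, b = a + 1 + d := ⟨b - a - 1, by omega⟩
  simp only [fij, show a + 1 + d + 1 - a - 1 = d + 1 by omega,
    show a + 1 + d - a - 1 = d by omega, fword, qComm]

lemma fgen_eq_gen {i : ℕ} (h1 : 1 ≤ i) (h2 : i ≤ N) :
    fgen F N i = gen F N (Gen.f ⟨i - 1, by omega⟩) := dif_pos ⟨h1, h2⟩

lemma commute_fgen_last_fgen {c : ℕ} (h : c + 2 ≤ N) :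
    Commute (fgen F N N) (fgen F N c) := by
  rcases Nat.eq_zero_or_pos c with rfl | hc
  · simp [fgen]
  · rw [fgen_eq_gen (by omega) le_rfl, fgen_eq_gen hc (by omega)]
    unfold Commute SemiconjBy
    simpa only [gen, map_mul] using RingQuot.mkAlgHom_rel (kk F)
      (UqRel.serre_f_far (F := F) (N := N) ⟨N - 1, by omega⟩ ⟨c - 1, by omega⟩
        (Or.inr (by simp; omega)))

lemma commute_fgen_last_fij {a b : ℕ} (hab : a < b) (hb : b + 1 ≤ N) :
    Commute (fgen F N N) (fij F N a b) := by
  induction b, hab using Nat.le_induction with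
  | base => rw [fij_self]; exact commute_fgen_last_fgen (c := a) (by omega)
  | succ b hab ih =>
    have hf := commute_fgen_last_fgen (F := F) (c := b) (by omega)
    have ih := ih (by omega)
    rw [fij_succ hab]
    exact ((ih.mul_right hf).smul_right _).sub_right ((hf.mul_right ih).smul_right _)

lemma qSerre_fgen_last_fgen_pred (hN : 2 ≤ N) :
    qSerre (vv F + (vv F)⁻¹) (fgen F N N) (fgen F N (N - 1)) = 0 := by
  rw [fgen_eq_gen (by omega) le_rfl, fgen_eq_gen (i := N - 1) (by omega) (by omega)]
  have hrel := RingQuot.mkAlgHom_rel (kk F)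
    (UqRel.serre_f_near (F := F) (N := N) ⟨N - 1, by omega⟩ ⟨N - 1 - 1, by omega⟩
      (Or.inr (by simp; omega)))
  simpa only [gen, map_mul, map_sub, map_add, map_smul, map_pow, map_zero, pow_two, qSerre,
    vv, zpow_neg, zpow_ofNat] using hrel

lemma qSerre_fgen_last_fij (hN : 2 ≤ N) {a : ℕ} (ha : a < N) :
    qSerre (vv F + (vv F)⁻¹) (fgen F N N) (fij F N a N) = 0 := by
  rcases Nat.lt_or_ge (a + 1) N with h | h
  · have hfij := fij_succ (F := F) (N := N) (show a < N - 1 by omega)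
    rw [Nat.sub_add_cancel (by omega)] at hfij
    rw [hfij]
    exact qSerre_qComm_of_commute (commute_fgen_last_fij (by omega) (by omega))
      (qSerre_fgen_last_fgen_pred hN)
  · have hfij := fij_self (F := F) (N := N) (N - 1)
    rw [Nat.sub_add_cancel (by omega)] at hfij
    rw [show a = N - 1 by omega, hfij]
    exact qSerre_fgen_last_fgen_pred hN

lemma fgen_last_pow_mul_fij (hN : 2 ≤ N) {a : ℕ} (ha : a < N) (p : ℕ) :
    fgen F N N ^ (p + 1) * fij F N a N =
      vv F ^ (p + 1) • (fij F N a N * fgen F N N ^ (p + 1)) -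
        (qq F * qint F (p + 1)) • (fij F N a (N + 1) * fgen F N N ^ p) := by
  rw [fij_succ ha]
  exact pow_succ_mul_eq_sub_qComm (qq_ne_zero F) rfl (qSerre_fgen_last_fij hN ha)
    (fun n => qint F n) qint_zero (fun n => by exact_mod_cast qint_succ n) p

end RootVectors

section Weights

variable {F : Type} [Field F] {N : ℕ}

lemma cartan_eq_zero_of_add_two_le {i j : ℕ} (h : j + 2 ≤ i) : cartan i j = 0 := by
  simp only [cartan]
  rw [if_neg (by omega), if_neg (by omega)]

lemma pairσ_succ (lam : ℕ → ℤ) (i : ℕ) : pairσ lam (i + 1) = pairσ lam i + lam (i + 1) :=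
  Finset.sum_Icc_succ_top (by omega) _

lemma hval_congr {lam mu : ℕ → ℤ} {i : ℕ} (h : ∀ k ≤ i, mu k = lam k) :
    hval F mu i = hval F lam i := by
  simp only [hval, pairσ, Finset.sum_congr rfl fun k hk => h k (Finset.mem_Icc.1 hk).2]

lemma Dmat_congr {lam mu : ℕ → ℤ} {n : ℕ} (h : ∀ j, j + 2 ≤ n → hval F mu j = hval F lam j) :
    Dmat F N mu n = Dmat F N lam n := by
  ext i j
  simp only [Dmat, Matrix.of_apply]
  split_ifs
  · rfl
  · rw [h _ (by omega)]
  · rfl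

lemma vv_pow_mul_hval {lam : ℕ → ℤ} {i p : ℕ} (h : pairσ lam i + i = p + 1) :
    vv F ^ (p + 1) * hval F lam i = -(qq F * qint F (p + 1)) := by
  have hq := qq_ne_zero F
  rw [hval, show pairσ lam i + (i : ℤ) - 1 = p by omega, h]
  simp only [zpow_neg, zpow_natCast, vv]
  field_simp
  ring

end Weights

section Commutation

variable {F : Type} [Field F] {N : ℕ}

lemma commute_fgen_last_hessEntry (lam : ℕ → ℤ) {i j : ℕ} (h : j + 3 ≤ N) :
    Commute (fgen F N N) (hessEntry F N lam i j) := by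
  unfold hessEntry
  split_ifs
  · exact commute_fgen_last_fij (by omega) (by omega)
  · exact (Algebra.commute_algebraMap_right (hval F lam (j + 1)) (fgen F N N)).neg_right
  · exact Commute.zero_right _

lemma fgen_last_pow_mul_ldet_hessCol (lam : ℕ → ℤ) {m : ℕ} (hm : m + 2 ≤ N) (p : ℕ) :
    fgen F N N ^ (p + 1) * ldet F N (hessCol F N lam m N) =
      ldet F N (hessCol F N lam m N) * (vv F ^ (p + 1) • fgen F N N ^ (p + 1)) -
        ldet F N (hessCol F N lam m (N + 1)) * ((qq F * qint F (p + 1)) • fgen F N N ^ p) := by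
  refine mul_ldet_of_commute _ _ (fun i j => ?_) (fun i j => ?_) (fun i => ?_)
  · simp [hessCol, Fin.castSucc_ne_last]
  · simpa [hessCol, Fin.castSucc_ne_last] using
      (commute_fgen_last_hessEntry lam (i := i) (j := j) (by omega)).pow_left (p + 1)
  · simp only [hessCol, Matrix.of_apply, if_pos, mul_smul_comm,
      fgen_last_pow_mul_fij (by omega) (show (i : ℕ) + 1 < N by omega)]

end Commutation

/-- assume `N ≥ 2`. Let `p ≥ 0`, `λ` a weight with `(λ,η) = 1-N`
and `(λ,α_N) = -p-1`, and `μ = λ + p α_N` (so `(μ,α_j) = (λ,α_j) + p a_{Nj}`).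
Then, with `F = f_N`: `F^{p+1} det→(D^N(μ)) = v^{p+1} det→(D^{N+1}(λ)) F^p` in `U`. -/
theorem stmt18 (F : Type) [Field F] (N : ℕ) (hN : 2 ≤ N) (p : ℕ)
    (lam mu : ℕ → ℤ)
    (hη : pairσ lam N = 1 - (N : ℤ))
    (hα : lam N = -(p : ℤ) - 1)
    (hmu : ∀ j, mu j = lam j + (p : ℤ) * cartan N j) :
    fgen F N N ^ (p + 1) * ldet F N (Dmat F N mu N) =
      vv F ^ (p + 1) • (ldet F N (Dmat F N lam (N + 1)) * fgen F N N ^ p) := by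
  obtain ⟨m, rfl⟩ : ∃ m, N = m + 2 := ⟨N - 2, by omega⟩
  have hDmu : Dmat F (m + 2) mu (m + 2) = Dmat F (m + 2) lam (m + 2) :=
    Dmat_congr fun j hj => hval_congr fun k hk => by
      rw [hmu, cartan_eq_zero_of_add_two_le (by omega), mul_zero, add_zero]
  have hscalar : vv F ^ (p + 1) * hval F lam (m + 1) + qq F * qint F (p + 1) = 0 := by
    have hsplit : pairσ lam (m + 2) = pairσ lam (m + 1) + lam (m + 2) := pairσ_succ lam (m + 1)
    rw [vv_pow_mul_hval (by push_cast at hη ⊢; omega), neg_add_cancel]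
  rw [hDmu, Dmat_succ, hess_succ, fgen_last_pow_mul_ldet_hessCol lam le_rfl, Dmat_succ,
    hess_succ, ldet_hessCol_succ, hess_succ, fij_self, show m + 1 + 2 = m + 2 + 1 from rfl,
    pow_succ' (fgen F (m + 2) (m + 2)) p]
  simp only [mul_smul_comm, add_mul, smul_mul_assoc, mul_assoc, smul_add, smul_smul]
  rw [sub_eq_iff_eq_add, add_assoc, ← add_smul, hscalar, zero_smul, add_zero]
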